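/- Let F be a field and let m ≥ 2 and p ≥ 2 both be even. With g^{(1)}_{k,s,t}(x) = x^{smp+kp+p−1+t} + x^{kmp+sp+p−1−t}, g^{(2)}_{k,s,t}(x) = x^{smp+kp+p−1+t} − x^{kmp+sp+p−1−t} in F[x] and φ(k,s,t) = (s+1,0,p−t) if k = m−1, φ(k,s,t) = (s,k+1,p−t) if k ≤ m−2, consider the loop Y = { φ^j(m−1, m/2−1, p/2) : 0 ≤ j ≤ m−2 } of size m−1. Then: (1) dim_F Span{ g^{(1)}_v(x) : v ∈ Y } = m−1−δ, where δ = 1 if char F = 2 and δ = 0 otherwise; (2) dim_F Span{ g^{(2)}_v(x) : v ∈ Y } = m−2; and (3) if char F = 2, then g^{(1)}_{(m−1, m/2−1, p/2)}(x) = Σ_{j=1}^{m−2} g^{(1)}_{φ^j(m−1, m/2−1, p/2)}(x). -/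

import Mathlib

open Polynomial

/-- `g⁽¹⁾_{k,s,t}(x) = x^{smp+kp+p-1+t} + x^{kmp+sp+p-1-t}` for a triple `(k,s,t)`. -/
noncomputable def gOne (F : Type*) [Field F] (m p : ℕ) (v : ℕ × ℕ × ℕ) : Polynomial F :=
  (X : Polynomial F) ^ (v.2.1 * (m * p) + v.1 * p + (p - 1) + v.2.2)
    + (X : Polynomial F) ^ (v.1 * (m * p) + v.2.1 * p + (p - 1 - v.2.2))

/-- `g⁽²⁾_{k,s,t}(x) = x^{smp+kp+p-1+t} - x^{kmp+sp+p-1-t}` for a triple `(k,s,t)`. -/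
noncomputable def gTwo (F : Type*) [Field F] (m p : ℕ) (v : ℕ × ℕ × ℕ) : Polynomial F :=
  (X : Polynomial F) ^ (v.2.1 * (m * p) + v.1 * p + (p - 1) + v.2.2)
    - (X : Polynomial F) ^ (v.1 * (m * p) + v.2.1 * p + (p - 1 - v.2.2))

/-- The chain map `φ(k,s,t) = (s+1, 0, p-t)` if `k = m-1`, and
`φ(k,s,t) = (s, k+1, p-t)` if `k ≤ m-2`. -/
def phiMap (m p : ℕ) : ℕ × ℕ × ℕ → ℕ × ℕ × ℕ :=
  fun v => if v.1 = m - 1 then (v.2.1 + 1, 0, p - v.2.2) else (v.2.1, v.1 + 1, p - v.2.2)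

/-- The exceptional loop `Y = { φʲ(m-1, m/2-1, p/2) : 0 ≤ j ≤ m-2 }` (for `m, p` even). -/
def loopYexc (m p : ℕ) : Set (ℕ × ℕ × ℕ) :=
  { v | ∃ i ≤ m - 2, v = (phiMap m p)^[i] (m - 1, m / 2 - 1, p / 2) }

/-!
Write `m = 2l+2` and `p = 2t`. The second exponent of `g_{φ v}` is the first exponent of `g_v`,
and the first exponents `e_j` of the `2l+1` points `φʲ(m-1, m/2-1, p/2)` of the loop are
distinct. So the two families are `X^{e_j} ± X^{e_{j-1}}`, indices mod `2l+1`, built on linearly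
independent monomials. The differences sum to zero and any `2l` of them are independent, so they
span a space of dimension `2l`. On a cycle of odd length the sums are independent as soon as
`2 ≠ 0`; in characteristic 2 they are the differences, and the vanishing of their sum is (3).
-/

section CyclicFamily

variable {R V : Type*} [CommRing R] [AddCommGroup V] [Module R V] {n : ℕ}

theorem Fin.eq_pow_val_mul_of_apply_add_one {M : Type*} [Monoid M] {c : Fin (n + 1) → M} {a : M}
    (h : ∀ j, c (j + 1) = a * c j) (j : Fin (n + 1)) : c j = a ^ (j : ℕ) * c 0 := by
  induction j using Fin.induction with
  | zero => simp
  | succ i ih =>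
    rw [← Fin.coeSucc_eq_succ, h, ih, Fin.coeSucc_eq_succ, Fin.val_succ, Fin.val_castSucc,
      pow_succ', mul_assoc]

theorem Fin.succ_sub_one_eq_castSucc (i : Fin n) : i.succ - 1 = i.castSucc :=
  (eq_sub_of_add_eq Fin.coeSucc_eq_succ).symm

theorem sum_smul_add_smul_apply_sub_one (c : Fin (n + 1) → R) (ε : R) (v : Fin (n + 1) → V) :
    ∑ j, c j • (v j + ε • v (j - 1)) = ∑ j, (c j + ε * c (j + 1)) • v j := by
  simp only [smul_add, add_smul, Finset.sum_add_distrib, smul_smul]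
  congr 1
  exact Fintype.sum_equiv (Equiv.subRight 1) _ _ fun j => by simp [mul_comm]

theorem sum_sub_apply_sub_one (v : Fin (n + 1) → V) : ∑ j, (v j - v (j - 1)) = 0 := by
  rw [Finset.sum_sub_distrib, sub_eq_zero]
  exact ((Equiv.subRight 1).sum_comp v).symm

namespace LinearIndependent

variable {v : Fin (n + 1) → V}

theorem add_mul_apply_add_one_eq_zero (hv : LinearIndependent R v) {c : Fin (n + 1) → R}
    {ε : R} (h : ∑ j, c j • (v j + ε • v (j - 1)) = 0) (j : Fin (n + 1)) :
    c j + ε * c (j + 1) = 0 := by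
  rw [sum_smul_add_smul_apply_sub_one] at h
  exact Fintype.linearIndependent_iff.mp hv _ h j

theorem add_apply_sub_one [NoZeroDivisors R] (hv : LinearIndependent R v) (hn : Even n)
    (h2 : (2 : R) ≠ 0) : LinearIndependent R fun j => v j + v (j - 1) := by
  rw [Fintype.linearIndependent_iff]
  intro c hc
  have hrel (j : Fin (n + 1)) : c (j + 1) = -1 * c j := by
    linear_combination hv.add_mul_apply_add_one_eq_zero (ε := 1) (by simpa using hc) j
  have hneg : c 0 = -c 0 := by
    calc c 0 = c (Fin.last n + 1) := by rw [Fin.last_add_one]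
      _ = (-1) ^ (n + 1) * c 0 := by
        rw [hrel, Fin.eq_pow_val_mul_of_apply_add_one hrel, Fin.val_last]; ring
      _ = -c 0 := by rw [hn.add_one.neg_one_pow]; ring
  have h0 : c 0 = 0 := by
    have : (2 : R) * c 0 = 0 := by linear_combination hneg
    exact (mul_eq_zero.mp this).resolve_left h2
  intro j
  rw [Fin.eq_pow_val_mul_of_apply_add_one hrel, h0, mul_zero]

theorem sub_apply_castSucc (hv : LinearIndependent R v) :
    LinearIndependent R fun i : Fin n => v i.succ - v i.castSucc := by
  rw [Fintype.linearIndependent_iff]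
  intro c hc
  set d : Fin (n + 1) → R := Fin.cons 0 c
  have hd : ∑ j, d j • (v j + (-1 : R) • v (j - 1)) = 0 := by
    rw [Fin.sum_univ_succ]
    simpa [d, Fin.succ_sub_one_eq_castSucc, ← sub_eq_add_neg] using hc
  have hrel (j : Fin (n + 1)) : d (j + 1) = 1 * d j := by
    linear_combination -hv.add_mul_apply_add_one_eq_zero hd j
  intro i
  simpa [d] using Fin.eq_pow_val_mul_of_apply_add_one hrel i.succ

theorem finrank_span_sub_apply_sub_one [Nontrivial R] (hv : LinearIndependent R v) :
    Module.finrank R (Submodule.span R (Set.range fun j => v j - v (j - 1))) = n := by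
  set f := fun j => v j - v (j - 1)
  have hspan : Submodule.span R (Set.range f)
      = Submodule.span R (Set.range fun i : Fin n => v i.succ - v i.castSucc) := by
    have hsucc (i : Fin n) : f i.succ = v i.succ - v i.castSucc := by
      simp [f, Fin.succ_sub_one_eq_castSucc]
    apply le_antisymm
    · rw [Submodule.span_le]
      rintro _ ⟨j, rfl⟩
      induction j using Fin.cases with
      | zero =>
        have hf0 : f 0 = -∑ i : Fin n, f i.succ := by
          have := sum_sub_apply_sub_one v
          rw [Fin.sum_univ_succ] at this
          exact eq_neg_of_add_eq_zero_left this
        rw [SetLike.mem_coe, hf0]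
        exact Submodule.neg_mem _ (Submodule.sum_mem _ fun i _ =>
          hsucc i ▸ Submodule.subset_span ⟨i, rfl⟩)
      | succ i => exact hsucc i ▸ Submodule.subset_span ⟨i, rfl⟩
    · exact Submodule.span_mono (Set.range_subset_iff.mpr fun i =>
        ⟨i.succ, by simp [f, Fin.succ_sub_one_eq_castSucc]⟩)
  rw [hspan, finrank_span_eq_card hv.sub_apply_castSucc, Fintype.card_fin]

end LinearIndependent

end CyclicFamily

theorem Polynomial.linearIndependent_X_pow_comp {R ι : Type*} [Semiring R] {e : ι → ℕ}
    (he : Function.Injective e) : LinearIndependent R fun i => (X : R[X]) ^ e i := by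
  simpa [X_pow_eq_monomial, Function.comp_def] using
    (basisMonomials R).linearIndependent.comp e he

theorem Function.IsPeriodicPt.apply_iterate_sub_one {α : Type*} {f : α → α} {x : α} {n : ℕ}
    (h : Function.IsPeriodicPt f (n + 1) x) (j : Fin (n + 1)) :
    f (f^[(j - 1 : Fin (n + 1))] x) = f^[j] x := by
  rw [← Function.iterate_succ_apply' f, ← h.iterate_mod_apply]
  congr
  have := congrArg Fin.val (sub_add_cancel j 1)
  rwa [Fin.val_add, Fin.val_one', Nat.add_mod_mod] at this

section Loop

def expFst (m p : ℕ) (v : ℕ × ℕ × ℕ) : ℕ := v.2.1 * (m * p) + v.1 * p + (p - 1) + v.2.2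

def expSnd (m p : ℕ) (v : ℕ × ℕ × ℕ) : ℕ := v.1 * (m * p) + v.2.1 * p + (p - 1 - v.2.2)

theorem gOne_eq (F : Type*) [Field F] (m p : ℕ) (v : ℕ × ℕ × ℕ) :
    gOne F m p v = X ^ expFst m p v + X ^ expSnd m p v := rfl

theorem gTwo_eq (F : Type*) [Field F] (m p : ℕ) (v : ℕ × ℕ × ℕ) :
    gTwo F m p v = X ^ expFst m p v - X ^ expSnd m p v := rfl

theorem gOne_eq_gTwo (F : Type*) [Field F] [CharP F 2] (m p : ℕ) : gOne F m p = gTwo F m p :=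
  funext fun _ => (CharTwo.sub_eq_add _ _).symm

theorem expSnd_phiMap {m p : ℕ} (hm : 1 ≤ m) {v : ℕ × ℕ × ℕ} (ht : 1 ≤ v.2.2)
    (htp : v.2.2 ≤ p) : expSnd m p (phiMap m p v) = expFst m p v := by
  obtain ⟨k, s, t⟩ := v
  simp only at ht htp
  have hsub : p - 1 - (p - t) = t - 1 := by omega
  unfold phiMap expFst expSnd
  split_ifs with hk
  · simp only at hk ⊢
    rw [hsub, hk]
    zify [hm, ht, ht.trans htp]
    ring
  · simp only [hsub]
    zify [hm, ht, ht.trans htp]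
    ring

theorem eq_of_expFst_eq {m p : ℕ} (hp : 0 < p) {v w : ℕ × ℕ × ℕ} (hv : v.1 < m)
    (hw : w.1 < m) (ht : v.2.2 = w.2.2) (h : expFst m p v = expFst m p w) : v = w := by
  obtain ⟨k, s, t⟩ := v
  obtain ⟨k', s', t'⟩ := w
  simp only at hv hw ht
  subst ht
  have hcode : (k + m * s) * p = (k' + m * s') * p := by
    unfold expFst at h; linarith
  have hcode' := Nat.eq_of_mul_eq_mul_right hp hcode
  have hk : k = k' := by
    simpa [Nat.add_mul_mod_self_left, Nat.mod_eq_of_lt hv, Nat.mod_eq_of_lt hw] using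
      congrArg (· % m) hcode'
  subst hk
  have hs : m * s = m * s' := by omega
  simp [Nat.eq_of_mul_eq_mul_left (by omega) hs]

/-- The value of `φ^j(m-1, m/2-1, p/2)` for `m = 2l+2`, `p = 2t` and `j ≤ 2l`. -/
def loopPoint (l t j : ℕ) : ℕ × ℕ × ℕ :=
  if j = 0 then (2 * l + 1, l, t)
  else if j % 2 = 1 then (l + 1 + j / 2, j / 2, t)
  else (j / 2 - 1, l + 1 + j / 2, t)

variable {l t : ℕ}

theorem phiMap_loopPoint {j : ℕ} (hj : j ≤ 2 * l) :
    phiMap (2 * l + 2) (2 * t) (loopPoint l t j) = loopPoint l t (j + 1) := by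
  unfold phiMap loopPoint
  split_ifs <;> simp_all [Prod.ext_iff] <;> omega

theorem phiMap_iterate_eq_loopPoint {j : ℕ} (hj : j ≤ 2 * l) :
    (phiMap (2 * l + 2) (2 * t))^[j] (2 * l + 1, l, t) = loopPoint l t j := by
  induction j with
  | zero => simp [loopPoint]
  | succ j ih => rw [Function.iterate_succ_apply', ih (by omega), phiMap_loopPoint (by omega)]

theorem eq_of_loopPoint_eq {j₁ j₂ : ℕ} (hj₁ : j₁ ≤ 2 * l) (hj₂ : j₂ ≤ 2 * l)
    (h : loopPoint l t j₁ = loopPoint l t j₂) : j₁ = j₂ := by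
  unfold loopPoint at h
  split_ifs at h <;> simp only [Prod.mk.injEq] at h <;> omega

theorem loopPoint_fst_lt {j : ℕ} (hj : j ≤ 2 * l) : (loopPoint l t j).1 < 2 * l + 2 := by
  unfold loopPoint; split_ifs <;> simp only <;> omega

theorem loopPoint_snd_snd (j : ℕ) : (loopPoint l t j).2.2 = t := by
  unfold loopPoint; split_ifs <;> rfl

theorem isPeriodicPt_phiMap :
    Function.IsPeriodicPt (phiMap (2 * l + 2) (2 * t)) (2 * l + 1) (2 * l + 1, l, t) := by
  rw [Function.IsPeriodicPt, Function.IsFixedPt, Function.iterate_succ_apply',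
    phiMap_iterate_eq_loopPoint le_rfl, phiMap_loopPoint le_rfl]
  simp [loopPoint]
  omega

def loopExp (l t : ℕ) (j : Fin (2 * l + 1)) : ℕ :=
  expFst (2 * l + 2) (2 * t) ((phiMap (2 * l + 2) (2 * t))^[j] (2 * l + 1, l, t))

theorem loopExp_injective (ht : 1 ≤ t) : Function.Injective (loopExp l t) := by
  intro j₁ j₂ h
  unfold loopExp at h
  rw [phiMap_iterate_eq_loopPoint (by omega), phiMap_iterate_eq_loopPoint (by omega)] at h
  refine Fin.ext (eq_of_loopPoint_eq (by omega) (by omega) (eq_of_expFst_eq (by omega) ?_ ?_ ?_ h))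
  · exact loopPoint_fst_lt (by omega)
  · exact loopPoint_fst_lt (by omega)
  · rw [loopPoint_snd_snd, loopPoint_snd_snd]

theorem expSnd_phiMap_iterate (ht : 1 ≤ t) (j : Fin (2 * l + 1)) :
    expSnd (2 * l + 2) (2 * t) ((phiMap (2 * l + 2) (2 * t))^[j] (2 * l + 1, l, t))
      = loopExp l t (j - 1) := by
  have htj : ((phiMap (2 * l + 2) (2 * t))^[(j - 1 : Fin _)] (2 * l + 1, l, t)).2.2 = t := by
    rw [phiMap_iterate_eq_loopPoint (by omega), loopPoint_snd_snd]
  rw [← isPeriodicPt_phiMap.apply_iterate_sub_one j, expSnd_phiMap (by omega) (by omega)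
    (by omega)]
  rfl

theorem loopStart_eq :
    ((2 * l + 2 - 1, (2 * l + 2) / 2 - 1, 2 * t / 2) : ℕ × ℕ × ℕ) = (2 * l + 1, l, t) := by
  simp only [Prod.mk.injEq]; omega

theorem loopYexc_eq_range :
    loopYexc (2 * l + 2) (2 * t)
      = Set.range fun j : Fin (2 * l + 1) =>
          (phiMap (2 * l + 2) (2 * t))^[j] (2 * l + 1, l, t) := by
  ext v
  simp only [loopYexc, loopStart_eq, Set.mem_ofPred_eq, Set.mem_range]
  constructor
  · rintro ⟨i, hi, rfl⟩
    exact ⟨⟨i, by omega⟩, rfl⟩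
  · rintro ⟨j, rfl⟩
    exact ⟨j, by omega, rfl⟩

variable (F : Type*) [Field F]

theorem gOne_phiMap_iterate (ht : 1 ≤ t) (j : Fin (2 * l + 1)) :
    gOne F (2 * l + 2) (2 * t) ((phiMap (2 * l + 2) (2 * t))^[j] (2 * l + 1, l, t))
      = X ^ loopExp l t j + X ^ loopExp l t (j - 1) := by
  rw [gOne_eq, expSnd_phiMap_iterate ht]
  rfl

theorem image_gOne_loopYexc (ht : 1 ≤ t) :
    gOne F (2 * l + 2) (2 * t) '' loopYexc (2 * l + 2) (2 * t)
      = Set.range fun j => (X : F[X]) ^ loopExp l t j + X ^ loopExp l t (j - 1) := by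
  rw [loopYexc_eq_range, ← Set.range_comp]
  simp only [Function.comp_def, gOne_phiMap_iterate F ht]

theorem gTwo_phiMap_iterate (ht : 1 ≤ t) (j : Fin (2 * l + 1)) :
    gTwo F (2 * l + 2) (2 * t) ((phiMap (2 * l + 2) (2 * t))^[j] (2 * l + 1, l, t))
      = X ^ loopExp l t j - X ^ loopExp l t (j - 1) := by
  rw [gTwo_eq, expSnd_phiMap_iterate ht]
  rfl

theorem image_gTwo_loopYexc (ht : 1 ≤ t) :
    gTwo F (2 * l + 2) (2 * t) '' loopYexc (2 * l + 2) (2 * t)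
      = Set.range fun j => (X : F[X]) ^ loopExp l t j - X ^ loopExp l t (j - 1) := by
  rw [loopYexc_eq_range, ← Set.range_comp]
  simp only [Function.comp_def, gTwo_phiMap_iterate F ht]

theorem linearIndependent_X_pow_loopExp (ht : 1 ≤ t) :
    LinearIndependent F fun j => (X : F[X]) ^ loopExp l t j :=
  linearIndependent_X_pow_comp (loopExp_injective ht)

theorem finrank_span_image_gTwo_loopYexc (ht : 1 ≤ t) :
    Module.finrank F
      (Submodule.span F (gTwo F (2 * l + 2) (2 * t) '' loopYexc (2 * l + 2) (2 * t))) = 2 * l := by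
  rw [image_gTwo_loopYexc F ht,
    (linearIndependent_X_pow_loopExp F ht).finrank_span_sub_apply_sub_one]

theorem finrank_span_image_gOne_loopYexc (ht : 1 ≤ t) (hchar : ringChar F ≠ 2) :
    Module.finrank F
      (Submodule.span F (gOne F (2 * l + 2) (2 * t) '' loopYexc (2 * l + 2) (2 * t)))
        = 2 * l + 1 := by
  rw [image_gOne_loopYexc F ht, finrank_span_eq_card
    ((linearIndependent_X_pow_loopExp F ht).add_apply_sub_one (even_two_mul l)
      (Ring.two_ne_zero hchar)), Fintype.card_fin]

theorem gTwo_loopStart_eq_sum [CharP F 2] (ht : 1 ≤ t) :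
    gTwo F (2 * l + 2) (2 * t) (2 * l + 1, l, t)
      = ∑ j ∈ Finset.Icc 1 (2 * l),
          gTwo F (2 * l + 2) (2 * t) ((phiMap (2 * l + 2) (2 * t))^[j] (2 * l + 1, l, t)) := by
  have hcycle : ∑ j : Fin (2 * l + 1),
      gTwo F (2 * l + 2) (2 * t) ((phiMap (2 * l + 2) (2 * t))^[j] (2 * l + 1, l, t)) = 0 := by
    simp only [gTwo_phiMap_iterate F ht]
    exact sum_sub_apply_sub_one _
  rwa [Fin.sum_univ_eq_sum_range (fun j =>
      gTwo F (2 * l + 2) (2 * t) ((phiMap (2 * l + 2) (2 * t))^[j] (2 * l + 1, l, t))),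
    Finset.range_eq_Ico, Finset.sum_eq_sum_Ico_succ_bot (by omega),
    Finset.Ico_add_one_right_eq_Icc, CharTwo.add_eq_zero] at hcycle

end Loop

/-- (Lemma 7(ii) of the paper.)  For `m, p` both even, on the
exceptional loop `Y` of size `m-1`:  the span of `{g⁽¹⁾_v : v ∈ Y}` has
dimension `m-1-δ` (with `δ = 1` iff `char F = 2`), the span of
`{g⁽²⁾_v : v ∈ Y}` has dimension `m-2`, and in characteristic `2`,
`g⁽¹⁾_{(m-1,m/2-1,p/2)} = Σ_{j=1}^{m-2} g⁽¹⁾_{φʲ(m-1,m/2-1,p/2)}`. -/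
theorem stmt_12 (F : Type*) [Field F] (m p : ℕ) (hm : 2 ≤ m) (hp : 2 ≤ p)
    (hme : Even m) (hpe : Even p) :
    (Module.finrank F (Submodule.span F (gOne F m p '' loopYexc m p))
      = m - 1 - (if ringChar F = 2 then 1 else 0)) ∧
    (Module.finrank F (Submodule.span F (gTwo F m p '' loopYexc m p)) = m - 2) ∧
    (ringChar F = 2 →
      gOne F m p (m - 1, m / 2 - 1, p / 2)
        = ∑ j ∈ Finset.Icc 1 (m - 2),
            gOne F m p ((phiMap m p)^[j] (m - 1, m / 2 - 1, p / 2))) := by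
  obtain ⟨l, rfl⟩ : ∃ l, m = 2 * l + 2 :=
    ⟨m / 2 - 1, by obtain ⟨a, rfl⟩ := hme; omega⟩
  obtain ⟨t, rfl⟩ : ∃ t, p = 2 * t := ⟨p / 2, by obtain ⟨b, rfl⟩ := hpe; omega⟩
  have ht : 1 ≤ t := by omega
  rw [loopStart_eq, show 2 * l + 2 - 2 = 2 * l by omega]
  refine ⟨?_, finrank_span_image_gTwo_loopYexc F ht, fun hchar => ?_⟩
  · split_ifs with hchar
    · have := ringChar.eq_iff.mp hchar
      rw [gOne_eq_gTwo, finrank_span_image_gTwo_loopYexc F ht]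
      omega
    · rw [finrank_span_image_gOne_loopYexc F ht hchar]
      omega
  · have := ringChar.eq_iff.mp hchar
    rw [gOne_eq_gTwo]
    exact gTwo_loopStart_eq_sum F ht
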